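/- arXiv:2309.07342 — 2 statements merged into one kernel-verified Lean document; each statement's English description precedes it below -/
import Mathlib

section
/- There exists a constant C > 0, depending only on q' and F, such that the following holds. For every m ≥ 1, every λ ≥ 0, and every pair (a, c) solving the mode-λ model system on (0,∞) with asymptotic data (c₀, 0, h) at τ = 0, one has for all τ ∈ (0, 1/m]: (i) (1+λ²)·a(τ)² + a'(τ)² ≤ C·((1+λ²)·h² + m⁻²·c₀²); (ii) a(τ)² ≤ C·(h² + τ²·λ²·h² + τ²·m⁻²·c₀²); (iii) c(τ)² ≤ C·(c₀² + τ⁴·(1+λ²)·h²). (This is the single spherical-harmonic-mode version of the paper's low-frequency estimate for the regular component α_J, Proposition 3.1.) -/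
/-!
The energy `E = 4q'a² + 4λ²(τ²+1)⁻²a² + a'² + (c - c₀)²` tends to `4(q' + λ²)h²` as `τ → 0⁺`.
Multiplying (E) by `2a'`, the friction term `-2a'²/τ` and the decay of the weight `(τ²+1)⁻²`
contribute with a favourable sign, and every other term is bounded by `E` except the forcing
`2f₃c₀a'`. Young's inequality with weight `τ` and an integrating factor then give
`E(τ) ≲ (1 + λ²)h² + c₀²τ²` on `(0,1]`, which is (i) for `τ ≤ 1/m`. Integrating the resulting
bound on `a'` from `0` gives (ii), and integrating `c' = 2τa` gives (iii).
-/

open Set Filter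

/-- The pair `(a, c)` solves the mode-`lam` model system on `I ⊆ (0,∞)`:
`a` is twice differentiable and `c` is differentiable on `I`, and for all `τ ∈ I`,
(E) `a'' + τ⁻¹·a' + 4q'·a + 4λ²·(τ²+1)⁻²·a = f₁·τ·a' + f₂·τ²·a + f₃·c` and
(C) `c' = 2τ·a`. -/
def SolvesModelSystem (q' : ℝ) (f₁ f₂ f₃ : ℝ → ℝ) (lam : ℝ)
    (a c : ℝ → ℝ) (I : Set ℝ) : Prop :=
  ∀ τ ∈ I,
    DifferentiableAt ℝ a τ ∧ DifferentiableAt ℝ (deriv a) τ ∧ DifferentiableAt ℝ c τ ∧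
    (deriv (deriv a) τ + τ⁻¹ * deriv a τ + 4 * q' * a τ
        + 4 * lam ^ 2 * ((τ ^ 2 + 1) ^ 2)⁻¹ * a τ
      = f₁ τ * τ * deriv a τ + f₂ τ * τ ^ 2 * a τ + f₃ τ * c τ) ∧
    deriv c τ = 2 * τ * a τ

/-- The pair `(a, c)` (solving the model system on `(0,∞)`, with `c` extended
continuously to `[0,∞)`) has asymptotic data `(c₀, O, h)` at `τ = 0`. -/
def HasAsymptoticData (a c : ℝ → ℝ) (c₀ O h : ℝ) : Prop :=
  ContinuousOn c (Ici 0) ∧ c 0 = c₀ ∧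
  ∃ K : ℝ, 0 ≤ K ∧ ∀ τ ∈ Ioc (0:ℝ) 1,
    |a τ - O * Real.log τ - h| ≤ K * τ ^ 2 * (1 + Real.log τ ^ 2) ∧
    |deriv a τ - O / τ| ≤ K * τ * (1 + Real.log τ ^ 2)

open Real Topology

lemma tendsto_mul_one_add_log_sq_nhdsGT_zero :
    Tendsto (fun x : ℝ => x * (1 + log x ^ 2)) (𝓝[>] 0) (𝓝 0) := by
  have hsqrt := tendsto_log_mul_rpow_nhdsGT_zero (r := 1 / 2) (by norm_num)
  have hlog : Tendsto (fun x : ℝ => x * log x ^ 2) (𝓝[>] 0) (𝓝 0) := by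
    refine (zero_mul (0 : ℝ) ▸ hsqrt.mul hsqrt).congr' ?_
    filter_upwards [self_mem_nhdsWithin] with x (hx : 0 < x)
    have hx' : x ^ (1 / 2 : ℝ) * x ^ (1 / 2 : ℝ) = x := by
      rw [← rpow_add hx]; norm_num
    linear_combination log x ^ 2 * hx'
  have hid : Tendsto (fun x : ℝ => x) (𝓝[>] 0) (𝓝 0) :=
    tendsto_nhdsWithin_of_tendsto_nhds tendsto_id
  simpa [mul_add] using hid.add hlog

lemma le_exp_mul_of_hasDerivAt_le_of_tendsto_nhdsGT {E E' : ℝ → ℝ} {K ε E₀ t : ℝ}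
    (hK : 0 ≤ K) (hε : 0 ≤ ε) (ht : 0 < t)
    (hE : ∀ x ∈ Ioc 0 t, HasDerivAt E (E' x) x) (hE' : ∀ x ∈ Ioc 0 t, E' x ≤ K * E x + ε)
    (hlim : Tendsto E (𝓝[>] 0) (𝓝 E₀)) :
    E t ≤ exp (K * t) * (E₀ + ε * t) := by
  set g : ℝ → ℝ := fun x => exp (-(K * x)) * E x - ε * x
  set g' : ℝ → ℝ := fun x => exp (-(K * x)) * (E' x - K * E x) - ε
  have hg : ∀ x ∈ Ioc 0 t, HasDerivAt g (g' x) x := by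
    intro x hx
    have hlin : HasDerivAt (fun y => -(K * y)) (-K) x := by
      simpa using ((hasDerivAt_id' x).const_mul K).fun_neg
    exact ((hlin.exp.fun_mul (hE x hx)).fun_sub ((hasDerivAt_id' x).const_mul ε)).congr_deriv
      (by ring)
  have hanti : AntitoneOn g (Ioc 0 t) := by
    refine antitoneOn_of_hasDerivWithinAt_nonpos (convex_Ioc 0 t)
      (fun x hx => (hg x hx).continuousAt.continuousWithinAt)
      (fun x hx => (hg x (interior_subset hx)).hasDerivWithinAt) fun x hx => ?_
    replace hx : x ∈ Ioc 0 t := interior_subset hx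
    have hexp : exp (-(K * x)) ≤ 1 := exp_le_one_iff.2 (by nlinarith [hx.1])
    nlinarith [hE' x hx, exp_pos (-(K * x))]
  have hg0 : Tendsto g (𝓝[>] 0) (𝓝 E₀) := by
    have h1 : Tendsto (fun x : ℝ => exp (-(K * x))) (𝓝[>] 0) (𝓝 1) := by
      simpa using (show Continuous fun x : ℝ => exp (-(K * x)) by fun_prop).continuousWithinAt
        (s := Ioi 0) (x := 0) |>.tendsto
    have h2 : Tendsto (fun x : ℝ => ε * x) (𝓝[>] 0) (𝓝 0) := by
      simpa using (show Continuous fun x : ℝ => ε * x by fun_prop).continuousWithinAt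
        (s := Ioi 0) (x := 0) |>.tendsto
    simpa using (h1.mul hlim).sub h2
  have hgt : g t ≤ E₀ := ge_of_tendsto hg0 <| by
    filter_upwards [Ioc_mem_nhdsGT ht] with x hx
    exact hanti hx (right_mem_Ioc.2 ht) hx.2
  have : E t = exp (K * t) * (g t + ε * t) := by
    simp only [g, sub_add_cancel, ← mul_assoc, ← exp_add, add_neg_cancel, exp_zero, one_mul]
  rw [this]
  gcongr

lemma abs_sub_le_mul_of_tendsto_nhdsGT {f f' : ℝ → ℝ} {B L t : ℝ} (ht : 0 < t)
    (hf : ∀ x ∈ Ioc 0 t, HasDerivAt f (f' x) x) (hB : ∀ x ∈ Ioc 0 t, |f' x| ≤ B)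
    (hL : Tendsto f (𝓝[>] 0) (𝓝 L)) :
    |f t - L| ≤ B * t := by
  have hmvt : ∀ x ∈ Ioc 0 t, |f t - f x| ≤ B * |t - x| := fun x hx =>
    (convex_Ioc 0 t).norm_image_sub_le_of_norm_hasDerivWithin_le
      (fun y hy => (hf y hy).hasDerivWithinAt) hB hx (right_mem_Ioc.2 ht)
  have hlim : Tendsto (fun x => B * |t - x|) (𝓝[>] 0) (𝓝 (B * t)) := by
    simpa [abs_of_pos ht] using (show Continuous fun x : ℝ => B * |t - x| by fun_prop)
      |>.continuousWithinAt (s := Ioi 0) (x := 0) |>.tendsto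
  refine le_of_tendsto_of_tendsto ((tendsto_const_nhds.sub hL).abs) hlim ?_
  filter_upwards [Ioc_mem_nhdsGT ht] with x hx using hmvt x hx

lemma two_mul_mul_le_of_abs_le {u F : ℝ} (hu : |u| ≤ F) (x y : ℝ) :
    2 * x * (u * y) ≤ F * (x ^ 2 + y ^ 2) := by
  obtain ⟨h₁, h₂⟩ := abs_le.1 hu
  nlinarith [mul_nonneg (sub_nonneg.2 h₂) (sq_nonneg (x + y)),
    mul_nonneg (neg_le_iff_add_nonneg.1 h₁) (sq_nonneg (x - y))]

lemma abs_mul_le_of_abs_le_of_le_one {u F r : ℝ} (hu : |u| ≤ F) (hr₀ : 0 ≤ r) (hr₁ : r ≤ 1) :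
    |u * r| ≤ F := by
  rw [abs_mul, abs_of_nonneg hr₀]
  exact (mul_le_of_le_one_right (abs_nonneg u) hr₁).trans hu

lemma two_mul_le_inv_mul_sq_add_mul_sq {ρ : ℝ} (hρ : 0 < ρ) (x y : ℝ) :
    2 * x * y ≤ ρ⁻¹ * x ^ 2 + ρ * y ^ 2 := by
  have := mul_nonneg (inv_nonneg.2 hρ.le) (sq_nonneg (x - ρ * y))
  field_simp at this ⊢
  nlinarith

noncomputable def modelEnergy (q' lam c₀ : ℝ) (a c : ℝ → ℝ) (s : ℝ) : ℝ :=
  4 * q' * a s ^ 2 + 4 * lam ^ 2 * ((s ^ 2 + 1) ^ 2)⁻¹ * a s ^ 2 + deriv a s ^ 2 + (c s - c₀) ^ 2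

section ModelSystem

variable {q' F lam c₀ h : ℝ} {f₁ f₂ f₃ a c : ℝ → ℝ}

lemma HasAsymptoticData.tendsto_nhdsGT_zero (hdata : HasAsymptoticData a c c₀ 0 h) :
    Tendsto a (𝓝[>] 0) (𝓝 h) ∧ Tendsto (deriv a) (𝓝[>] 0) (𝓝 0) ∧
      Tendsto c (𝓝[>] 0) (𝓝 c₀) := by
  obtain ⟨hc, hc₀, K, -, hK⟩ := hdata
  have hsmall := tendsto_mul_one_add_log_sq_nhdsGT_zero
  have hId : Tendsto (fun x : ℝ => x) (𝓝[>] 0) (𝓝 0) :=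
    tendsto_nhdsWithin_of_tendsto_nhds tendsto_id
  have hnear : ∀ᶠ x in 𝓝[>] (0 : ℝ), x ∈ Ioc 0 1 := Ioc_mem_nhdsGT one_pos
  refine ⟨?_, ?_, ?_⟩
  · refine tendsto_sub_nhds_zero_iff.1 (squeeze_zero_norm' ?_
      (by simpa using (hId.mul hsmall).const_mul K))
    filter_upwards [hnear] with x hx
    simpa [mul_assoc, sq] using (hK x hx).1
  · refine squeeze_zero_norm' ?_ (by simpa using hsmall.const_mul K)
    filter_upwards [hnear] with x hx
    simpa [mul_assoc] using (hK x hx).2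
  · exact hc₀ ▸ (hc 0 self_mem_Ici).tendsto.mono_left (nhdsWithin_mono _ Ioi_subset_Ici_self)

lemma tendsto_modelEnergy (hdata : HasAsymptoticData a c c₀ 0 h) :
    Tendsto (modelEnergy q' lam c₀ a c) (𝓝[>] 0) (𝓝 (4 * (q' + lam ^ 2) * h ^ 2)) := by
  obtain ⟨ha, ha', hc⟩ := hdata.tendsto_nhdsGT_zero
  have hw : Tendsto (fun s : ℝ => ((s ^ 2 + 1) ^ 2)⁻¹) (𝓝[>] 0) (𝓝 1) := by
    simpa using ((by fun_prop : Continuous fun s : ℝ => (s ^ 2 + 1) ^ 2).fun_inv₀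
      fun s => by positivity).continuousWithinAt (s := Ioi 0) (x := 0) |>.tendsto
  rw [show 4 * (q' + lam ^ 2) * h ^ 2
      = 4 * q' * h ^ 2 + 4 * lam ^ 2 * 1 * h ^ 2 + 0 ^ 2 + (c₀ - c₀) ^ 2 by ring]
  exact ((((ha.pow 2).const_mul (4 * q')).add (((hw.const_mul (4 * lam ^ 2)).mul
    (ha.pow 2)))).add (ha'.pow 2)).add ((hc.sub_const c₀).pow 2)

lemma hasDerivAt_modelEnergy (hsol : SolvesModelSystem q' f₁ f₂ f₃ lam a c (Ioi 0)) {s : ℝ}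
    (hs : 0 < s) :
    HasDerivAt (modelEnergy q' lam c₀ a c)
      (8 * q' * a s * deriv a s - 16 * lam ^ 2 * s * ((s ^ 2 + 1) ^ 3)⁻¹ * a s ^ 2
        + 8 * lam ^ 2 * ((s ^ 2 + 1) ^ 2)⁻¹ * a s * deriv a s
        + 2 * deriv a s * deriv (deriv a) s + 4 * s * a s * (c s - c₀)) s := by
  obtain ⟨ha, ha', hc, -, hc'⟩ := hsol s hs
  have hw : HasDerivAt (fun x : ℝ => ((x ^ 2 + 1) ^ 2)⁻¹) (-(4 * s) * ((s ^ 2 + 1) ^ 3)⁻¹) s := by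
    refine ((((hasDerivAt_pow 2 s).add_const 1).fun_pow 2).fun_inv (by positivity)).congr_deriv ?_
    field_simp
    ring
  have := ((((ha.hasDerivAt.fun_pow 2).const_mul (4 * q')).fun_add
    ((hw.const_mul (4 * lam ^ 2)).fun_mul (ha.hasDerivAt.fun_pow 2))).fun_add
    (ha'.hasDerivAt.fun_pow 2)).fun_add (((hc'.symm ▸ hc.hasDerivAt).sub_const c₀).fun_pow 2)
  exact this.congr_deriv (by push_cast; ring)

lemma deriv_modelEnergy_le (hq : 1 ≤ 4 * q') (hf₁ : ∀ τ ≥ 0, |f₁ τ| ≤ F)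
    (hf₂ : ∀ τ ≥ 0, |f₂ τ| ≤ F) (hf₃ : ∀ τ ≥ 0, |f₃ τ| ≤ F)
    (hsol : SolvesModelSystem q' f₁ f₂ f₃ lam a c (Ioi 0)) {ρ s : ℝ} (hρ : 0 < ρ)
    (hs : s ∈ Ioc 0 1) :
    deriv (modelEnergy q' lam c₀ a c) s
      ≤ (4 * F + 2 + ρ⁻¹) * modelEnergy q' lam c₀ a c s + ρ * (F * c₀) ^ 2 := by
  obtain ⟨hs₀, hs₁⟩ := hs
  obtain ⟨-, -, -, heq, -⟩ := hsol s hs₀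
  rw [(hasDerivAt_modelEnergy hsol hs₀).deriv, modelEnergy]
  set A := a s
  set A' := deriv a s
  set D := c s - c₀
  have hc : c s = D + c₀ := by simp [D]
  rw [hc] at heq
  have hF : 0 ≤ F := (abs_nonneg _).trans (hf₁ 0 le_rfl)
  have hdamp : 0 ≤ 16 * lam ^ 2 * s * ((s ^ 2 + 1) ^ 3)⁻¹ * A ^ 2 + 2 * s⁻¹ * A' ^ 2 := by
    positivity
  have h₁ := two_mul_mul_le_of_abs_le
    (abs_mul_le_of_abs_le_of_le_one (hf₁ s hs₀.le) hs₀.le hs₁) A' A'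
  have h₂ := two_mul_mul_le_of_abs_le
    (abs_mul_le_of_abs_le_of_le_one (hf₂ s hs₀.le) (sq_nonneg s) (pow_le_one₀ hs₀.le hs₁)) A' A
  have h₃ := two_mul_mul_le_of_abs_le (hf₃ s hs₀.le) A' D
  have h₄ := two_mul_mul_le_of_abs_le (u := 2 * s) (F := 2) (by
    rw [abs_of_pos (by positivity)]; linarith) D A
  have h₅ := two_mul_le_inv_mul_sq_add_mul_sq hρ A' (f₃ s * c₀)
  have h₆ : ρ * (f₃ s * c₀) ^ 2 ≤ ρ * (F * c₀) ^ 2 := by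
    rw [mul_pow, mul_pow, ← sq_abs (f₃ s)]
    gcongr
    exact hf₃ s hs₀.le
  have hE : A ^ 2 + A' ^ 2 + D ^ 2
      ≤ 4 * q' * A ^ 2 + 4 * lam ^ 2 * ((s ^ 2 + 1) ^ 2)⁻¹ * A ^ 2 + A' ^ 2 + D ^ 2 := by
    have : 0 ≤ 4 * lam ^ 2 * ((s ^ 2 + 1) ^ 2)⁻¹ * A ^ 2 := by positivity
    nlinarith [sq_nonneg A]
  have hKE := mul_le_mul_of_nonneg_left hE (by positivity : 0 ≤ 4 * F + 2 + ρ⁻¹)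
  have hlhs : 8 * q' * A * A' - 16 * lam ^ 2 * s * ((s ^ 2 + 1) ^ 3)⁻¹ * A ^ 2
      + 8 * lam ^ 2 * ((s ^ 2 + 1) ^ 2)⁻¹ * A * A' + 2 * A' * deriv (deriv a) s + 4 * s * A * D
      = -(16 * lam ^ 2 * s * ((s ^ 2 + 1) ^ 3)⁻¹ * A ^ 2 + 2 * s⁻¹ * A' ^ 2)
        + 2 * A' * (f₁ s * s * A') + 2 * A' * (f₂ s * s ^ 2 * A) + 2 * A' * (f₃ s * D)
        + 2 * D * (2 * s * A) + 2 * A' * (f₃ s * c₀) := by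
    linear_combination (2 * A') * heq
  rw [hlhs]
  have hρ' := inv_nonneg.2 hρ.le
  linarith [mul_nonneg hF (sq_nonneg A), mul_nonneg hF (sq_nonneg D), sq_nonneg A',
    mul_nonneg hρ' (sq_nonneg A), mul_nonneg hρ' (sq_nonneg D)]

lemma sq_deriv_le_modelEnergy (hq : 0 ≤ q') (s : ℝ) :
    deriv a s ^ 2 ≤ modelEnergy q' lam c₀ a c s := by
  unfold modelEnergy
  have : 0 ≤ 4 * lam ^ 2 * ((s ^ 2 + 1) ^ 2)⁻¹ * a s ^ 2 := by positivity
  nlinarith [sq_nonneg (a s), sq_nonneg (c s - c₀)]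

lemma one_add_sq_mul_sq_add_sq_deriv_le_modelEnergy (hq : 1 ≤ q') {s : ℝ} (hs : s ^ 2 ≤ 1) :
    (1 + lam ^ 2) * a s ^ 2 + deriv a s ^ 2 ≤ modelEnergy q' lam c₀ a c s := by
  unfold modelEnergy
  have hw : 1 ≤ 4 * ((s ^ 2 + 1) ^ 2)⁻¹ := by
    rw [← div_eq_mul_inv, le_div_iff₀ (by positivity)]
    nlinarith [sq_nonneg s]
  have := mul_le_mul_of_nonneg_left hw (by positivity : 0 ≤ lam ^ 2 * a s ^ 2)
  nlinarith [sq_nonneg (a s), sq_nonneg (c s - c₀)]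

lemma modelEnergy_le (hq : 1 ≤ 4 * q') (hf₁ : ∀ τ ≥ 0, |f₁ τ| ≤ F)
    (hf₂ : ∀ τ ≥ 0, |f₂ τ| ≤ F) (hf₃ : ∀ τ ≥ 0, |f₃ τ| ≤ F)
    (hsol : SolvesModelSystem q' f₁ f₂ f₃ lam a c (Ioi 0)) (hdata : HasAsymptoticData a c c₀ 0 h)
    {t : ℝ} (ht : t ∈ Ioc 0 1) :
    modelEnergy q' lam c₀ a c t
      ≤ exp (4 * F + 3) * (4 * (q' + lam ^ 2) * h ^ 2 + (F * c₀ * t) ^ 2) := by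
  obtain ⟨ht₀, ht₁⟩ := ht
  have hF : 0 ≤ F := (abs_nonneg _).trans (hf₁ 0 le_rfl)
  have hq₀ : 0 ≤ q' := by linarith
  -- Young's inequality with weight `ρ = t` keeps the growth rate `(4F + 2 + ρ⁻¹) t` bounded,
  -- while the forcing term integrates to `(F c₀ t)²`.
  calc modelEnergy q' lam c₀ a c t
      ≤ exp ((4 * F + 2 + t⁻¹) * t) * (4 * (q' + lam ^ 2) * h ^ 2 + t * (F * c₀) ^ 2 * t) :=
        le_exp_mul_of_hasDerivAt_le_of_tendsto_nhdsGT (by positivity) (by positivity) ht₀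
          (fun x hx => (hasDerivAt_modelEnergy hsol hx.1).differentiableAt.hasDerivAt)
          (fun x hx => deriv_modelEnergy_le hq hf₁ hf₂ hf₃ hsol ht₀ ⟨hx.1, hx.2.trans ht₁⟩)
          (tendsto_modelEnergy hdata)
    _ = exp ((4 * F + 2) * t + 1) * (4 * (q' + lam ^ 2) * h ^ 2 + (F * c₀ * t) ^ 2) := by
        field_simp
    _ ≤ exp (4 * F + 3) * (4 * (q' + lam ^ 2) * h ^ 2 + (F * c₀ * t) ^ 2) := by
        gcongr ?_ * _
        exact exp_le_exp.2 (by nlinarith)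

lemma modelEnergy_le_of_le_one_div (hq : 1 ≤ q') (hf₁ : ∀ τ ≥ 0, |f₁ τ| ≤ F)
    (hf₂ : ∀ τ ≥ 0, |f₂ τ| ≤ F) (hf₃ : ∀ τ ≥ 0, |f₃ τ| ≤ F)
    (hsol : SolvesModelSystem q' f₁ f₂ f₃ lam a c (Ioi 0)) (hdata : HasAsymptoticData a c c₀ 0 h)
    {m x : ℝ} (hm : 1 ≤ m) (hx : x ∈ Ioc 0 (1 / m)) :
    modelEnergy q' lam c₀ a c x
      ≤ exp (4 * F + 3) * (4 * q' + F ^ 2) * ((1 + lam ^ 2) * h ^ 2 + c₀ ^ 2 / m ^ 2) := by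
  have hm₁ : 1 / m ≤ 1 := (div_le_one₀ (by linarith)).2 hm
  have hx₂ : x ^ 2 ≤ 1 / m ^ 2 := by simpa using pow_le_pow_left₀ hx.1.le hx.2 2
  refine (modelEnergy_le (by linarith) hf₁ hf₂ hf₃ hsol hdata ⟨hx.1, hx.2.trans hm₁⟩).trans ?_
  rw [mul_assoc (exp _) (4 * q' + F ^ 2)]
  refine mul_le_mul_of_nonneg_left ?_ (exp_pos _).le
  have h₁ : (F * c₀ * x) ^ 2 ≤ F ^ 2 * (c₀ ^ 2 / m ^ 2) :=
    calc (F * c₀ * x) ^ 2 = (F * c₀) ^ 2 * x ^ 2 := by ring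
      _ ≤ (F * c₀) ^ 2 * (1 / m ^ 2) := by gcongr
      _ = F ^ 2 * (c₀ ^ 2 / m ^ 2) := by ring
  have h₂ : 0 ≤ (q' - 1) * lam ^ 2 * h ^ 2 := by
    have := sub_nonneg.2 hq
    positivity
  have h₃ : 0 ≤ F ^ 2 * ((1 + lam ^ 2) * h ^ 2) + 4 * q' * (c₀ ^ 2 / m ^ 2) := by
    have : 0 ≤ q' := by linarith
    positivity
  linarith

lemma abs_le_of_sq_deriv_le (hsol : SolvesModelSystem q' f₁ f₂ f₃ lam a c (Ioi 0))
    (hdata : HasAsymptoticData a c c₀ 0 h) {M t : ℝ} (ht : 0 < t)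
    (hM : ∀ x ∈ Ioc 0 t, deriv a x ^ 2 ≤ M) :
    |a t| ≤ |h| + √M * t := by
  have := abs_sub_le_mul_of_tendsto_nhdsGT ht (fun x hx => (hsol x hx.1).1.hasDerivAt)
    (fun x hx => abs_le_sqrt (hM x hx)) hdata.tendsto_nhdsGT_zero.1
  linarith [abs_sub_abs_le_abs_sub (a t) h]

lemma sq_le_of_sq_deriv_le (hsol : SolvesModelSystem q' f₁ f₂ f₃ lam a c (Ioi 0))
    (hdata : HasAsymptoticData a c c₀ 0 h) {M t : ℝ} (ht : 0 < t)
    (hM : ∀ x ∈ Ioc 0 t, deriv a x ^ 2 ≤ M) :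
    a t ^ 2 ≤ 2 * (h ^ 2 + M * t ^ 2) := by
  have hM₀ : 0 ≤ M := (sq_nonneg _).trans (hM t (right_mem_Ioc.2 ht))
  calc a t ^ 2 = |a t| ^ 2 := (sq_abs _).symm
    _ ≤ (|h| + √M * t) ^ 2 := by gcongr; exact abs_le_of_sq_deriv_le hsol hdata ht hM
    _ ≤ 2 * (|h| ^ 2 + (√M * t) ^ 2) := add_sq_le
    _ = 2 * (h ^ 2 + M * t ^ 2) := by rw [sq_abs, mul_pow, sq_sqrt hM₀]

lemma sq_c_le_of_sq_deriv_le (hsol : SolvesModelSystem q' f₁ f₂ f₃ lam a c (Ioi 0))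
    (hdata : HasAsymptoticData a c c₀ 0 h) {M t : ℝ} (ht : 0 < t)
    (hM : ∀ x ∈ Ioc 0 t, deriv a x ^ 2 ≤ M) :
    c t ^ 2 ≤ 2 * (c₀ ^ 2 + 8 * t ^ 4 * (h ^ 2 + M * t ^ 2)) := by
  have hM₀ : 0 ≤ M := (sq_nonneg _).trans (hM t (right_mem_Ioc.2 ht))
  have hc' : ∀ x ∈ Ioc 0 t, |deriv c x| ≤ 2 * t * (|h| + √M * t) := by
    intro x hx
    rw [(hsol x hx.1).2.2.2.2, abs_mul, abs_of_pos (by linarith [hx.1])]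
    have hax := abs_le_of_sq_deriv_le hsol hdata hx.1 fun y hy => hM y ⟨hy.1, hy.2.trans hx.2⟩
    gcongr
    · exact hx.2
    · exact hax.trans (by gcongr; exact hx.2)
  have hc := abs_sub_le_mul_of_tendsto_nhdsGT ht (fun x hx => (hsol x hx.1).2.2.1.hasDerivAt) hc'
    hdata.tendsto_nhdsGT_zero.2.2
  calc c t ^ 2 = (c₀ + (c t - c₀)) ^ 2 := by ring
    _ ≤ 2 * (c₀ ^ 2 + (c t - c₀) ^ 2) := add_sq_le
    _ ≤ 2 * (c₀ ^ 2 + (2 * t * (|h| + √M * t) * t) ^ 2) := by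
        gcongr 2 * (_ + ?_)
        exact sq_le_sq.2 (hc.trans (le_abs_self _))
    _ = 2 * (c₀ ^ 2 + 4 * t ^ 4 * (|h| + √M * t) ^ 2) := by ring
    _ ≤ 2 * (c₀ ^ 2 + 4 * t ^ 4 * (2 * (|h| ^ 2 + (√M * t) ^ 2))) := by gcongr; exact add_sq_le
    _ = 2 * (c₀ ^ 2 + 8 * t ^ 4 * (h ^ 2 + M * t ^ 2)) := by
        rw [sq_abs, mul_pow, sq_sqrt hM₀]; ring

lemma sq_le_of_sq_deriv_le_mul (hsol : SolvesModelSystem q' f₁ f₂ f₃ lam a c (Ioi 0))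
    (hdata : HasAsymptoticData a c c₀ 0 h) {K m t : ℝ} (hK : 0 ≤ K) (ht : t ∈ Ioc 0 1)
    (hM : ∀ x ∈ Ioc 0 t, deriv a x ^ 2 ≤ K * ((1 + lam ^ 2) * h ^ 2 + c₀ ^ 2 / m ^ 2)) :
    a t ^ 2 ≤ 2 * (K + 1) * (h ^ 2 + t ^ 2 * lam ^ 2 * h ^ 2 + t ^ 2 * c₀ ^ 2 / m ^ 2) := by
  have hth : t ^ 2 * h ^ 2 ≤ h ^ 2 :=
    mul_le_of_le_one_left (sq_nonneg h) (pow_le_one₀ ht.1.le ht.2)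
  have hMt : K * ((1 + lam ^ 2) * h ^ 2 + c₀ ^ 2 / m ^ 2) * t ^ 2
      ≤ K * (h ^ 2 + t ^ 2 * lam ^ 2 * h ^ 2 + t ^ 2 * c₀ ^ 2 / m ^ 2) :=
    calc _ = K * (t ^ 2 * h ^ 2 + t ^ 2 * lam ^ 2 * h ^ 2 + t ^ 2 * c₀ ^ 2 / m ^ 2) := by ring
      _ ≤ _ := by gcongr
  have : 0 ≤ t ^ 2 * lam ^ 2 * h ^ 2 + t ^ 2 * c₀ ^ 2 / m ^ 2 := by positivity
  nlinarith [sq_le_of_sq_deriv_le hsol hdata ht.1 hM]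

lemma sq_c_le_of_sq_deriv_le_mul (hsol : SolvesModelSystem q' f₁ f₂ f₃ lam a c (Ioi 0))
    (hdata : HasAsymptoticData a c c₀ 0 h) {K m t : ℝ} (hK : 0 ≤ K) (hm : 1 ≤ m)
    (ht : t ∈ Ioc 0 1)
    (hM : ∀ x ∈ Ioc 0 t, deriv a x ^ 2 ≤ K * ((1 + lam ^ 2) * h ^ 2 + c₀ ^ 2 / m ^ 2)) :
    c t ^ 2 ≤ 16 * (K + 1) * (c₀ ^ 2 + t ^ 4 * (1 + lam ^ 2) * h ^ 2) := by
  have hm₂ : c₀ ^ 2 / m ^ 2 ≤ c₀ ^ 2 := div_le_self (sq_nonneg c₀) (one_le_pow₀ hm)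
  have ht₆ : t ^ 6 ≤ t ^ 4 := pow_le_pow_of_le_one ht.1.le ht.2 (by norm_num)
  have ht₆' : t ^ 6 * (c₀ ^ 2 / m ^ 2) ≤ c₀ ^ 2 :=
    (mul_le_of_le_one_left (by positivity) (pow_le_one₀ ht.1.le ht.2)).trans hm₂
  have hMt : t ^ 4 * (K * ((1 + lam ^ 2) * h ^ 2 + c₀ ^ 2 / m ^ 2) * t ^ 2)
      ≤ K * (c₀ ^ 2 + t ^ 4 * (1 + lam ^ 2) * h ^ 2) :=
    calc _ = K * (t ^ 6 * (c₀ ^ 2 / m ^ 2) + t ^ 6 * (1 + lam ^ 2) * h ^ 2) := by ring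
      _ ≤ _ := by gcongr
  have : 0 ≤ t ^ 4 * h ^ 2 := by positivity
  nlinarith [sq_c_le_of_sq_deriv_le hsol hdata ht.1 hM]

end ModelSystem

theorem lowFrequency_regular_estimate_general (q' F : ℝ) (hq : 1 ≤ q') :
    ∃ C > 0, ∀ f₁ f₂ f₃ : ℝ → ℝ,
      ContinuousOn f₁ (Ici 0) → ContinuousOn f₂ (Ici 0) → ContinuousOn f₃ (Ici 0) →
      (∀ τ ≥ (0:ℝ), |f₁ τ| ≤ F) → (∀ τ ≥ (0:ℝ), |f₂ τ| ≤ F) → (∀ τ ≥ (0:ℝ), |f₃ τ| ≤ F) →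
      ∀ m lam : ℝ, 1 ≤ m → 0 ≤ lam →
      ∀ a c : ℝ → ℝ, ∀ c₀ h : ℝ,
      SolvesModelSystem q' f₁ f₂ f₃ lam a c (Ioi 0) →
      HasAsymptoticData a c c₀ 0 h →
      ∀ τ ∈ Ioc (0:ℝ) (1 / m),
        ((1 + lam ^ 2) * a τ ^ 2 + deriv a τ ^ 2
            ≤ C * ((1 + lam ^ 2) * h ^ 2 + c₀ ^ 2 / m ^ 2)) ∧
        (a τ ^ 2 ≤ C * (h ^ 2 + τ ^ 2 * lam ^ 2 * h ^ 2 + τ ^ 2 * c₀ ^ 2 / m ^ 2)) ∧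
        (c τ ^ 2 ≤ C * (c₀ ^ 2 + τ ^ 4 * (1 + lam ^ 2) * h ^ 2)) := by
  have hq₀ : 0 ≤ q' := by linarith
  set K := exp (4 * F + 3) * (4 * q' + F ^ 2)
  have hK : 0 ≤ K := by positivity
  refine ⟨16 * (K + 1), by positivity, ?_⟩
  intro f₁ f₂ f₃ _ _ _ hf₁ hf₂ hf₃ m lam hm _ a c c₀ h hsol hdata τ ⟨hτ₀, hτm⟩
  have hτ : τ ∈ Ioc 0 1 := ⟨hτ₀, hτm.trans ((div_le_one₀ (by linarith)).2 hm)⟩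
  have hE : ∀ x ∈ Ioc 0 τ,
      modelEnergy q' lam c₀ a c x ≤ K * ((1 + lam ^ 2) * h ^ 2 + c₀ ^ 2 / m ^ 2) :=
    fun x hx => modelEnergy_le_of_le_one_div hq hf₁ hf₂ hf₃ hsol hdata hm ⟨hx.1, hx.2.trans hτm⟩
  have hM : ∀ x ∈ Ioc 0 τ, deriv a x ^ 2 ≤ K * ((1 + lam ^ 2) * h ^ 2 + c₀ ^ 2 / m ^ 2) :=
    fun x hx => (sq_deriv_le_modelEnergy hq₀ x).trans (hE x hx)
  refine ⟨?_, ?_, ?_⟩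
  · calc (1 + lam ^ 2) * a τ ^ 2 + deriv a τ ^ 2 ≤ modelEnergy q' lam c₀ a c τ :=
          one_add_sq_mul_sq_add_sq_deriv_le_modelEnergy hq (pow_le_one₀ hτ₀.le hτ.2)
      _ ≤ K * ((1 + lam ^ 2) * h ^ 2 + c₀ ^ 2 / m ^ 2) := hE τ (right_mem_Ioc.2 hτ₀)
      _ ≤ 16 * (K + 1) * ((1 + lam ^ 2) * h ^ 2 + c₀ ^ 2 / m ^ 2) := by gcongr; linarith
  · refine (sq_le_of_sq_deriv_le_mul hsol hdata hK hτ hM).trans ?_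
    gcongr
    linarith
  · exact sq_c_le_of_sq_deriv_le_mul hsol hdata hK hm hτ hM

/-- Low-frequency estimate for the regular component (single-mode version of
Proposition 3.1 of the paper). -/
theorem lowFrequency_regular_estimate (q' F : ℝ) (hq : 1 ≤ q') (hF : 0 ≤ F) :
    ∃ C > 0, ∀ f₁ f₂ f₃ : ℝ → ℝ,
      ContinuousOn f₁ (Ici 0) → ContinuousOn f₂ (Ici 0) → ContinuousOn f₃ (Ici 0) →
      (∀ τ ≥ (0:ℝ), |f₁ τ| ≤ F) → (∀ τ ≥ (0:ℝ), |f₂ τ| ≤ F) → (∀ τ ≥ (0:ℝ), |f₃ τ| ≤ F) →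
      ∀ m lam : ℝ, 1 ≤ m → 0 ≤ lam →
      ∀ a c : ℝ → ℝ, ∀ c₀ h : ℝ,
      SolvesModelSystem q' f₁ f₂ f₃ lam a c (Ioi 0) →
      HasAsymptoticData a c c₀ 0 h →
      ∀ τ ∈ Ioc (0:ℝ) (1 / m),
        ((1 + lam ^ 2) * a τ ^ 2 + deriv a τ ^ 2
            ≤ C * ((1 + lam ^ 2) * h ^ 2 + c₀ ^ 2 / m ^ 2)) ∧
        (a τ ^ 2 ≤ C * (h ^ 2 + τ ^ 2 * lam ^ 2 * h ^ 2 + τ ^ 2 * c₀ ^ 2 / m ^ 2)) ∧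
        (c τ ^ 2 ≤ C * (c₀ ^ 2 + τ ^ 4 * (1 + lam ^ 2) * h ^ 2)) :=
  lowFrequency_regular_estimate_general q' F hq
end

section
/- High-frequency backward estimate, single-mode version (Proposition 3.8 of the paper): there exists a constant C > 0, depending only on q' and F, such that for every τ₀ ∈ (0,1], every λ ≥ 1/(4τ₀), and every pair (a, c) solving the mode-λ model system on the interval [τ₀, 1], one has for all τ ∈ [τ₀, 1]: τ⁻¹·a(τ)² + τ·λ²·a(τ)² + τ·a'(τ)² ≤ C·( (1+λ²)·a(1)² + a'(1)² + c(1)² ). The constant C is independent of τ₀ and λ. -/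
open Set Filter

/-!
Completing the square, the mode energy
`Z = s a'² + a a' + a²/(2s) + s p(s) a² + c²`, with `p(s) = 4q' + 4λ²/(s²+1)²`,
controls `s⁻¹ a² + s λ² a² + s a'² + c²`. Along a solution the second-order terms cancel:
`Z' = (2sa' + a)(f₁ s a' + f₂ s² a + f₃ c) - a²/(2s²) + s p'(s) a² + 4 s a c`.
Every term is bounded by a multiple of `Z`, the singular one `a²/(2s²)` through `λ a² ≤ Z`
(AM-GM between `a²/(4s)` and `s λ² a²`), so `Z' ≥ -(K + (2λs²)⁻¹) Z` with `K = 10F + 12`.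
Hence `exp (K s - (2λs)⁻¹) Z` is nondecreasing, and on `[τ₀, 1]` the weight varies by at most
`exp (K + 2)` because `2λτ₀ ≥ 1/2`.
-/

open Real

lemma le_exp_sub_mul_of_hasDerivAt {u u' φ φ' : ℝ → ℝ} {x y t : ℝ}
    (hu : ∀ s ∈ Icc x y, HasDerivAt u (u' s) s) (hφ : ∀ s ∈ Icc x y, HasDerivAt φ (φ' s) s)
    (h : ∀ s ∈ Ioo x y, 0 ≤ φ' s * u s + u' s) (ht : t ∈ Icc x y) :
    u t ≤ exp (φ y - φ t) * u y := by
  have hderiv : ∀ s ∈ Icc x y, HasDerivAt (fun s ↦ exp (φ s) * u s)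
      (exp (φ s) * (φ' s * u s + u' s)) s := fun s hs ↦
    ((hφ s hs).exp.mul (hu s hs)).congr_deriv (by ring)
  have hmono : MonotoneOn (fun s ↦ exp (φ s) * u s) (Icc x y) :=
    monotoneOn_of_hasDerivWithinAt_nonneg (convex_Icc x y)
      (fun s hs ↦ (hderiv s hs).continuousAt.continuousWithinAt)
      (fun s hs ↦ (hderiv s (interior_subset hs)).hasDerivWithinAt)
      (fun s hs ↦ mul_nonneg (exp_pos _).le (h s (by rwa [interior_Icc] at hs)))
  have hty : exp (φ t) * u t ≤ exp (φ y) * u y := hmono ht ⟨ht.1.trans ht.2, le_rfl⟩ ht.2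
  rw [exp_sub, div_mul_eq_mul_div, le_div_iff₀ (exp_pos _)]
  linarith

noncomputable def modePotential (q' lam s : ℝ) : ℝ :=
  4 * q' + 4 * lam ^ 2 * ((s ^ 2 + 1) ^ 2)⁻¹

noncomputable def energyDensity (s p a w c : ℝ) : ℝ :=
  (w ^ 2 + a ^ 2) / (4 * s) + s * p * a ^ 2 + c ^ 2

-- `w = 2 s a' + a`: completing the square in the paper's `s a'² + a a' + a²/(2s)`.
noncomputable def modeEnergy (q' lam : ℝ) (a c : ℝ → ℝ) (s : ℝ) : ℝ :=
  energyDensity s (modePotential q' lam s) (a s) (2 * s * deriv a s + a s) (c s)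

section energyDensity

variable {s p a w c : ℝ}

lemma four_mul_energyDensity (hs : s ≠ 0) :
    4 * s * energyDensity s p a w c = w ^ 2 + a ^ 2 + 4 * s ^ 2 * p * a ^ 2 + 4 * s * c ^ 2 := by
  unfold energyDensity; field_simp

lemma energyDensity_nonneg (hs : 0 < s) (hp : 0 ≤ p) : 0 ≤ energyDensity s p a w c := by
  unfold energyDensity; positivity

lemma w_sq_le_energyDensity (hs : 0 < s) (hp : 0 ≤ p) :
    w ^ 2 ≤ 4 * s * energyDensity s p a w c := by
  rw [four_mul_energyDensity hs.ne']; nlinarith [sq_nonneg a, sq_nonneg c, sq_nonneg (s * a)]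

lemma a_sq_le_energyDensity (hs : 0 < s) (hp : 0 ≤ p) :
    a ^ 2 ≤ 4 * s * energyDensity s p a w c := by
  rw [four_mul_energyDensity hs.ne']; nlinarith [sq_nonneg w, sq_nonneg c, sq_nonneg (s * a)]

lemma c_sq_le_energyDensity (hs : 0 < s) (hp : 0 ≤ p) : c ^ 2 ≤ energyDensity s p a w c := by
  unfold energyDensity
  have : 0 ≤ (w ^ 2 + a ^ 2) / (4 * s) := by positivity
  have : 0 ≤ s * p * a ^ 2 := by positivity
  linarith

lemma mul_sq_le_energyDensity (hs : 0 < s) : s * p * a ^ 2 ≤ energyDensity s p a w c := by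
  unfold energyDensity
  have : 0 ≤ (w ^ 2 + a ^ 2) / (4 * s) := by positivity
  nlinarith [sq_nonneg c]

lemma mul_a_sq_le_energyDensity {l : ℝ} (hs : 0 < s) (hlp : l ^ 2 ≤ p) :
    l * a ^ 2 ≤ energyDensity s p a w c := by
  have h4 := four_mul_energyDensity (p := p) (a := a) (w := w) (c := c) hs.ne'
  have hE : 4 * s * (l * a ^ 2) ≤ 4 * s * energyDensity s p a w c := by
    rw [h4]
    nlinarith [sq_nonneg w, sq_nonneg c, sq_nonneg ((1 - 2 * s * l) * a),
      mul_nonneg (mul_nonneg (sq_nonneg s) (sq_nonneg a)) (sub_nonneg.2 hlp)]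
  exact le_of_mul_le_mul_left hE (by positivity)

lemma weighted_sq_le_energyDensity {l b : ℝ} (hs : 0 < s) (hl : l ^ 2 ≤ p) :
    s⁻¹ * a ^ 2 + s * l ^ 2 * a ^ 2 + s * b ^ 2 ≤ 9 * energyDensity s p a (2 * s * b + a) c := by
  have hp : 0 ≤ p := (sq_nonneg l).trans hl
  have hw := w_sq_le_energyDensity (a := a) (w := 2 * s * b + a) (c := c) hs hp
  have ha := a_sq_le_energyDensity (a := a) (w := 2 * s * b + a) (c := c) hs hp
  have hpa := mul_sq_le_energyDensity (p := p) (a := a) (w := 2 * s * b + a) (c := c) hs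
  have h1 : s⁻¹ * a ^ 2 ≤ 4 * energyDensity s p a (2 * s * b + a) c := by
    rw [inv_mul_le_iff₀ hs]; linarith
  have h2 : s * l ^ 2 * a ^ 2 ≤ s * p * a ^ 2 := by gcongr
  have h3 : s * b ^ 2 ≤ 4 * energyDensity s p a (2 * s * b + a) c := by
    have : 4 * s * (s * b ^ 2) ≤ 4 * s * (4 * energyDensity s p a (2 * s * b + a) c) := by
      nlinarith [sq_nonneg (2 * s * b + 2 * a)]
    exact le_of_mul_le_mul_left this (by positivity)
  linarith

end energyDensity

lemma neg_le_mul_of_abs_le {f x F M : ℝ} (hf : |f| ≤ F) (hx : |x| ≤ M) : -(F * M) ≤ f * x := by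
  have : |f * x| ≤ F * M := by
    rw [abs_mul]; exact mul_le_mul hf hx (abs_nonneg _) ((abs_nonneg _).trans hf)
  linarith [neg_abs_le (f * x)]

lemma neg_le_forcing_term {F f₁ f₂ f₃ s a b c E : ℝ} (hs0 : 0 ≤ s) (hs1 : s ≤ 1)
    (hf₁ : |f₁| ≤ F) (hf₂ : |f₂| ≤ F) (hf₃ : |f₃| ≤ F)
    (hw : (2 * s * b + a) ^ 2 ≤ 4 * E) (ha : a ^ 2 ≤ 4 * E) (hc : c ^ 2 ≤ E) :
    -(10 * F * E) ≤ (2 * s * b + a) * (f₁ * s * b + f₂ * s ^ 2 * a + f₃ * c) := by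
  set w := 2 * s * b + a
  have hsb : s * b = (w - a) / 2 := by ring
  have h₁ : -(F * (4 * E)) ≤ f₁ * (w * (s * b)) := by
    refine neg_le_mul_of_abs_le hf₁ (abs_le.2 ⟨?_, ?_⟩) <;> rw [hsb] <;>
      nlinarith [sq_nonneg (w + a), sq_nonneg (w - a)]
  have h₂ : -(F * (4 * E)) ≤ f₂ * (s ^ 2 * (w * a)) := by
    have hwa : |w * a| ≤ 4 * E := abs_le.2 ⟨by nlinarith [sq_nonneg (w + a)],
      by nlinarith [sq_nonneg (w - a)]⟩
    refine neg_le_mul_of_abs_le hf₂ ?_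
    rw [abs_mul, abs_of_nonneg (by positivity)]
    have hs2 : s ^ 2 ≤ 1 := pow_le_one₀ hs0 hs1
    exact (mul_le_of_le_one_left (abs_nonneg _) hs2).trans hwa
  have h₃ : -(F * (2 * E)) ≤ f₃ * (w * c) :=
    neg_le_mul_of_abs_le hf₃ (abs_le.2 ⟨by nlinarith [sq_nonneg (w + 2 * c)],
      by nlinarith [sq_nonneg (w - 2 * c)]⟩)
  linarith

section modePotential

variable {q' lam s : ℝ}

lemma hasDerivAt_modePotential :
    HasDerivAt (modePotential q' lam) (-16 * lam ^ 2 * s * ((s ^ 2 + 1) ^ 3)⁻¹) s := by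
  have h : HasDerivAt (fun t : ℝ ↦ (t ^ 2 + 1) ^ 2) (2 * (s ^ 2 + 1) * (2 * s)) s := by
    simpa using ((hasDerivAt_pow 2 s).add_const 1).fun_pow 2
  refine (((h.inv (by positivity)).const_mul (4 * lam ^ 2)).const_add (4 * q')).congr_deriv ?_
  field_simp
  ring

lemma sq_le_modePotential (hq : 0 ≤ q') (hs : s ^ 2 ≤ 1) : lam ^ 2 ≤ modePotential q' lam s := by
  have h : (4 : ℝ)⁻¹ ≤ ((s ^ 2 + 1) ^ 2)⁻¹ :=
    inv_anti₀ (by positivity) (by nlinarith [sq_nonneg s])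
  unfold modePotential
  nlinarith [sq_nonneg lam]

lemma modePotential_nonneg (hq : 0 ≤ q') : 0 ≤ modePotential q' lam s := by
  unfold modePotential; positivity

lemma modePotential_one : modePotential q' lam 1 = 4 * q' + lam ^ 2 := by
  norm_num [modePotential]
  ring

end modePotential

lemma hasDerivAt_modeEnergy {q' lam s : ℝ} {f₁ f₂ f₃ a c : ℝ → ℝ} {I : Set ℝ}
    (hsol : SolvesModelSystem q' f₁ f₂ f₃ lam a c I) (hsI : s ∈ I) (hs : 0 < s) :
    HasDerivAt (modeEnergy q' lam a c)
      ((2 * s * deriv a s + a s) * (f₁ s * s * deriv a s + f₂ s * s ^ 2 * a s + f₃ s * c s)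
        - a s ^ 2 / (2 * s ^ 2) - 16 * lam ^ 2 * s ^ 2 * ((s ^ 2 + 1) ^ 3)⁻¹ * a s ^ 2
        + 4 * s * a s * c s) s := by
  obtain ⟨ha, ha', hc, hE, hc'⟩ := hsol s hsI
  have hw : HasDerivAt (fun t ↦ 2 * t * deriv a t + a t)
      (2 * deriv a s + 2 * s * deriv (deriv a) s + deriv a s) s := by
    have := (((hasDerivAt_id s).const_mul 2).mul ha'.hasDerivAt).add ha.hasDerivAt
    exact this.congr_deriv (by simp)
  have h := ((((hw.fun_pow 2).fun_add (ha.hasDerivAt.fun_pow 2)).fun_div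
    ((hasDerivAt_id' s).const_mul 4) (by simp [hs.ne'])).fun_add
    (((hasDerivAt_id' s).fun_mul (hasDerivAt_modePotential (q' := q') (lam := lam))).fun_mul
      (ha.hasDerivAt.fun_pow 2))).fun_add (hc.hasDerivAt.fun_pow 2)
  refine h.congr_deriv ?_
  have ha'' : deriv (deriv a) s = f₁ s * s * deriv a s + f₂ s * s ^ 2 * a s + f₃ s * c s
      - s⁻¹ * deriv a s - 4 * q' * a s - 4 * lam ^ 2 * ((s ^ 2 + 1) ^ 2)⁻¹ * a s := by
    linarith
  rw [hc', ha'']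
  simp only [modePotential]
  field_simp
  ring

lemma neg_mul_energyDensity_le {q' lam s F f₁ f₂ f₃ a b c : ℝ} (hq : 0 ≤ q') (hlam : 0 < lam)
    (hs0 : 0 < s) (hs1 : s ≤ 1) (hf₁ : |f₁| ≤ F) (hf₂ : |f₂| ≤ F) (hf₃ : |f₃| ≤ F) :
    -((10 * F + 12 + (2 * lam * s ^ 2)⁻¹) *
        energyDensity s (modePotential q' lam s) a (2 * s * b + a) c) ≤
      (2 * s * b + a) * (f₁ * s * b + f₂ * s ^ 2 * a + f₃ * c) - a ^ 2 / (2 * s ^ 2)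
        - 16 * lam ^ 2 * s ^ 2 * ((s ^ 2 + 1) ^ 3)⁻¹ * a ^ 2 + 4 * s * a * c := by
  set p := modePotential q' lam s
  set E := energyDensity s p a (2 * s * b + a) c
  have hs2 : s ^ 2 ≤ 1 := pow_le_one₀ hs0.le hs1
  have hlp : lam ^ 2 ≤ p := sq_le_modePotential hq hs2
  have hp : 0 ≤ p := (sq_nonneg lam).trans hlp
  have hw : (2 * s * b + a) ^ 2 ≤ 4 * E := (w_sq_le_energyDensity hs0 hp).trans (by
    nlinarith [energyDensity_nonneg (a := a) (w := 2 * s * b + a) (c := c) hs0 hp])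
  have ha : a ^ 2 ≤ 4 * E := (a_sq_le_energyDensity hs0 hp).trans (by
    nlinarith [energyDensity_nonneg (a := a) (w := 2 * s * b + a) (c := c) hs0 hp])
  have hc : c ^ 2 ≤ E := c_sq_le_energyDensity hs0 hp
  have hforcing := neg_le_forcing_term hs0.le hs1 hf₁ hf₂ hf₃ hw ha hc
  have hsingular : a ^ 2 / (2 * s ^ 2) ≤ (2 * lam * s ^ 2)⁻¹ * E := by
    have h := mul_a_sq_le_energyDensity (a := a) (w := 2 * s * b + a) (c := c) hs0 hlp
    calc a ^ 2 / (2 * s ^ 2) = (2 * lam * s ^ 2)⁻¹ * (lam * a ^ 2) := by field_simp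
      _ ≤ (2 * lam * s ^ 2)⁻¹ * E := by gcongr
  have hpotential : 16 * lam ^ 2 * s ^ 2 * ((s ^ 2 + 1) ^ 3)⁻¹ * a ^ 2 ≤ 4 * E := by
    have hu : s * (s ^ 2 + 1)⁻¹ ≤ 1 := by
      rw [← div_eq_mul_inv, div_le_one (by positivity)]; nlinarith [sq_nonneg (s - 1)]
    have h := mul_sq_le_energyDensity (p := p) (a := a) (w := 2 * s * b + a) (c := c) hs0
    calc 16 * lam ^ 2 * s ^ 2 * ((s ^ 2 + 1) ^ 3)⁻¹ * a ^ 2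
        = 4 * (s * (4 * lam ^ 2 * ((s ^ 2 + 1) ^ 2)⁻¹) * a ^ 2) * (s * (s ^ 2 + 1)⁻¹) := by
          rw [pow_succ (s ^ 2 + 1), mul_inv]; ring
      _ ≤ 4 * (s * p * a ^ 2) * 1 := by
          gcongr
          simp only [p, modePotential]; linarith
      _ ≤ 4 * E := by linarith
  have hcoupling : -(8 * E) ≤ 4 * s * a * c := by
    nlinarith [sq_nonneg (a + 2 * c), mul_nonneg hs0.le (sq_nonneg (a + 2 * c))]
  linarith

lemma modeEnergy_le_exp_mul_modeEnergy_one {q' F lam τ₀ τ : ℝ} {f₁ f₂ f₃ a c : ℝ → ℝ}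
    (hq : 0 ≤ q') (hf₁ : ∀ s ∈ Icc τ₀ 1, |f₁ s| ≤ F) (hf₂ : ∀ s ∈ Icc τ₀ 1, |f₂ s| ≤ F)
    (hf₃ : ∀ s ∈ Icc τ₀ 1, |f₃ s| ≤ F) (hτ₀ : 0 < τ₀) (hlam : 1 / (4 * τ₀) ≤ lam)
    (hsol : SolvesModelSystem q' f₁ f₂ f₃ lam a c (Icc τ₀ 1)) (hτ : τ ∈ Icc τ₀ 1) :
    modeEnergy q' lam a c τ ≤ exp (10 * F + 14) * modeEnergy q' lam a c 1 := by
  have hlam0 : 0 < lam := (by positivity : 0 < 1 / (4 * τ₀)).trans_le hlam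
  have hF : 0 ≤ F := (abs_nonneg _).trans (hf₁ τ hτ)
  have hpos : ∀ s ∈ Icc τ₀ 1, 0 < s := fun s hs ↦ hτ₀.trans_le hs.1
  have hweight : ∀ s ∈ Icc τ₀ (1 : ℝ), HasDerivAt (fun t ↦ (10 * F + 12) * t - (2 * lam * t)⁻¹)
      (10 * F + 12 + (2 * lam * s ^ 2)⁻¹) s := fun s hs ↦
    (((hasDerivAt_id' s).const_mul _).sub (((hasDerivAt_id' s).const_mul (2 * lam)).inv
      (by have := hpos s hs; positivity))).congr_deriv (by field_simp; ring)
  have hgronwall := le_exp_sub_mul_of_hasDerivAt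
    (fun s hs ↦ hasDerivAt_modeEnergy hsol hs (hpos s hs)) hweight (fun s hs ↦ by
      have hs' := Ioo_subset_Icc_self hs
      have := neg_mul_energyDensity_le (a := a s) (b := deriv a s) (c := c s) hq hlam0
        (hpos s hs') hs'.2 (hf₁ s hs') (hf₂ s hs') (hf₃ s hs')
      unfold modeEnergy
      linarith) hτ
  have hexp : (10 * F + 12) * 1 - (2 * lam * 1)⁻¹ - ((10 * F + 12) * τ - (2 * lam * τ)⁻¹)
      ≤ 10 * F + 14 := by
    have h1 : (2 * lam * τ)⁻¹ ≤ 2 := by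
      rw [inv_le_comm₀ (by have := hpos τ hτ; positivity) two_pos]
      rw [div_le_iff₀ (by positivity)] at hlam
      nlinarith [hτ.1]
    have h2 : 0 ≤ (2 * lam * 1)⁻¹ := by positivity
    nlinarith [hpos τ hτ]
  have hZ1 : 0 ≤ modeEnergy q' lam a c 1 :=
    energyDensity_nonneg one_pos (modePotential_nonneg hq)
  exact hgronwall.trans (by gcongr)

lemma modeEnergy_one_le {q' lam : ℝ} {a c : ℝ → ℝ} (hq : 0 ≤ q') :
    modeEnergy q' lam a c 1 ≤
      (4 * q' + 2) * ((1 + lam ^ 2) * a 1 ^ 2 + deriv a 1 ^ 2 + c 1 ^ 2) := by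
  simp only [modeEnergy, energyDensity, modePotential_one]
  nlinarith [sq_nonneg (a 1 - 2 * deriv a 1), mul_nonneg hq (sq_nonneg (a 1)),
    mul_nonneg hq (sq_nonneg (deriv a 1)), mul_nonneg hq (sq_nonneg (c 1)),
    mul_nonneg (mul_nonneg hq (sq_nonneg lam)) (sq_nonneg (a 1)),
    mul_nonneg (sq_nonneg lam) (sq_nonneg (a 1))]


theorem highFrequency_backward_estimate_general (q' F : ℝ) (hq : 1 ≤ q') :
    ∃ C > 0, ∀ f₁ f₂ f₃ : ℝ → ℝ,
      ContinuousOn f₁ (Ici 0) → ContinuousOn f₂ (Ici 0) → ContinuousOn f₃ (Ici 0) →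
      (∀ τ ≥ (0:ℝ), |f₁ τ| ≤ F) → (∀ τ ≥ (0:ℝ), |f₂ τ| ≤ F) → (∀ τ ≥ (0:ℝ), |f₃ τ| ≤ F) →
      ∀ τ₀ lam : ℝ, τ₀ ∈ Ioc (0:ℝ) 1 → 1 / (4 * τ₀) ≤ lam →
      ∀ a c : ℝ → ℝ,
      SolvesModelSystem q' f₁ f₂ f₃ lam a c (Icc τ₀ 1) →
      ∀ τ ∈ Icc τ₀ 1,
        τ⁻¹ * a τ ^ 2 + τ * lam ^ 2 * a τ ^ 2 + τ * deriv a τ ^ 2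
          ≤ C * ((1 + lam ^ 2) * a 1 ^ 2 + deriv a 1 ^ 2 + c 1 ^ 2) := by
  refine ⟨9 * exp (10 * F + 14) * (4 * q' + 2), mul_pos (by positivity) (by linarith), ?_⟩
  intro f₁ f₂ f₃ _ _ _ hf₁ hf₂ hf₃ τ₀ lam hτ₀ hlam a c hsol τ hτ
  have hq0 : 0 ≤ q' := by linarith
  have hτ0 : 0 < τ := hτ₀.1.trans_le hτ.1
  have hbound {f : ℝ → ℝ} (hf : ∀ τ ≥ (0 : ℝ), |f τ| ≤ F) : ∀ s ∈ Icc τ₀ 1, |f s| ≤ F :=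
    fun s hs ↦ hf s (hτ₀.1.le.trans hs.1)
  have henergy := modeEnergy_le_exp_mul_modeEnergy_one hq0 (hbound hf₁) (hbound hf₂) (hbound hf₃)
    hτ₀.1 hlam hsol hτ
  calc τ⁻¹ * a τ ^ 2 + τ * lam ^ 2 * a τ ^ 2 + τ * deriv a τ ^ 2
      ≤ 9 * modeEnergy q' lam a c τ :=
        weighted_sq_le_energyDensity hτ0 (sq_le_modePotential hq0 (pow_le_one₀ hτ0.le hτ.2))
    _ ≤ 9 * (exp (10 * F + 14) * modeEnergy q' lam a c 1) := by gcongr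
    _ ≤ 9 * (exp (10 * F + 14) *
          ((4 * q' + 2) * ((1 + lam ^ 2) * a 1 ^ 2 + deriv a 1 ^ 2 + c 1 ^ 2))) := by
        gcongr; exact modeEnergy_one_le hq0
    _ = _ := by ring

/-- High-frequency backward estimate (single-mode version of Proposition 3.8
of the paper). -/
theorem highFrequency_backward_estimate (q' F : ℝ) (hq : 1 ≤ q') (hF : 0 ≤ F) :
    ∃ C > 0, ∀ f₁ f₂ f₃ : ℝ → ℝ,
      ContinuousOn f₁ (Ici 0) → ContinuousOn f₂ (Ici 0) → ContinuousOn f₃ (Ici 0) →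
      (∀ τ ≥ (0:ℝ), |f₁ τ| ≤ F) → (∀ τ ≥ (0:ℝ), |f₂ τ| ≤ F) → (∀ τ ≥ (0:ℝ), |f₃ τ| ≤ F) →
      ∀ τ₀ lam : ℝ, τ₀ ∈ Ioc (0:ℝ) 1 → 1 / (4 * τ₀) ≤ lam →
      ∀ a c : ℝ → ℝ,
      SolvesModelSystem q' f₁ f₂ f₃ lam a c (Icc τ₀ 1) →
      ∀ τ ∈ Icc τ₀ 1,
        τ⁻¹ * a τ ^ 2 + τ * lam ^ 2 * a τ ^ 2 + τ * deriv a τ ^ 2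
          ≤ C * ((1 + lam ^ 2) * a 1 ^ 2 + deriv a 1 ^ 2 + c 1 ^ 2) :=
  highFrequency_backward_estimate_general q' F hq
end
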